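/- Let Θ be a p×p correlation matrix with smallest eigenvalue λ_p, and let α ∈ ℝ^p with α_m = min_j |α_j| and α_M = max_j |α_j|. If λ_p ≥ (α_M² − 1)/α_m² (with α_m > 0), then the matrix g(Θ,α) defined by g_{ij} = Θ_{ij} α_i α_j for i ≠ j and g_{ii} = 1 is positive semi-definite. -/

import Mathlib

open Matrix

/-!
Put `μ = max λ 0`; since `Θ` is positive semidefinite and `λ` bounds its Rayleigh quotient from
below, `Θ - μ I` is positive semidefinite. With `D = diag α`, the link matrix
splits as `D (Θ - μ I) D + diag (1 + (μ - 1) α_i²)` because `Θ` has unit diagonal. The first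
summand is a congruence of a positive semidefinite matrix, and the diagonal entries of the second
are at least `1 + μ α_m² - α_M² ≥ 0` by the eigenvalue condition.
-/

namespace Matrix

variable {n : Type*} [Fintype n] [DecidableEq n]

theorem posSemidef_sub_smul_one_of_le_dotProduct_mulVec {Θ : Matrix n n ℝ} (hΘ : Θ.IsHermitian)
    {μ : ℝ} (hμ : ∀ x : n → ℝ, μ * (x ⬝ᵥ x) ≤ x ⬝ᵥ Θ *ᵥ x) : (Θ - μ • 1).PosSemidef := by
  refine .of_dotProduct_mulVec_nonneg (hΘ.sub (isHermitian_one.smul (.all μ))) fun x => ?_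
  have hx : star x = x := star_trivial x
  rw [hx, sub_mulVec, smul_mulVec, one_mulVec, dotProduct_sub, dotProduct_smul, smul_eq_mul]
  linarith [hμ x]

def multiplicativeLink {R : Type*} [Semiring R] (Θ : Matrix n n R) (α : n → R) : Matrix n n R :=
  of fun i j => if i = j then 1 else Θ i j * α i * α j

theorem multiplicativeLink_eq {R : Type*} [CommRing R] {Θ : Matrix n n R}
    (hdiag : ∀ i, Θ i i = 1) (α : n → R) (μ : R) :
    multiplicativeLink Θ α =
      diagonal α * (Θ - μ • 1) * diagonal α + diagonal (fun i => 1 + (μ - 1) * α i ^ 2) := by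
  ext i j
  simp only [multiplicativeLink, of_apply, add_apply, mul_diagonal, diagonal_mul, sub_apply,
    smul_apply, one_apply, diagonal_apply, smul_eq_mul]
  by_cases h : i = j
  · subst h
    simp only [if_true, hdiag]
    ring
  · simp only [h, if_false]
    ring

theorem posSemidef_multiplicativeLink {Θ : Matrix n n ℝ} (hdiag : ∀ i, Θ i i = 1)
    (α : n → ℝ) {μ : ℝ} (hΘμ : (Θ - μ • 1).PosSemidef) (hα : ∀ i, 0 ≤ 1 + (μ - 1) * α i ^ 2) :
    (multiplicativeLink Θ α).PosSemidef := by
  rw [multiplicativeLink_eq hdiag α μ]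
  have hD : (diagonal α)ᴴ = diagonal α := by simp
  refine .add ?_ (posSemidef_diagonal_iff.mpr hα)
  simpa only [hD] using hΘμ.conjTranspose_mul_mul_same (diagonal α)

end Matrix

/-- Multiplicative link: off-diagonal Θ_{ij} α_i α_j, diagonal 1. -/
theorem multiplicative_link_posSemidef {p : ℕ}
    (Θ : Matrix (Fin p) (Fin p) ℝ) (hΘ : Θ.PosSemidef)
    (hdiag : ∀ i, Θ i i = 1)
    (lam : ℝ) (hlam : ∀ x : Fin p → ℝ, lam * (x ⬝ᵥ x) ≤ x ⬝ᵥ Θ.mulVec x)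
    (α : Fin p → ℝ) (αm αM : ℝ) (hαm : 0 < αm)
    (hm : ∀ j, αm ≤ |α j|) (hM : ∀ j, |α j| ≤ αM)
    (hcond : lam ≥ (αM ^ 2 - 1) / αm ^ 2) :
    (Matrix.of (fun i j => if i = j then (1 : ℝ) else Θ i j * α i * α j)).PosSemidef := by
  have hμ : ∀ x : Fin p → ℝ, max lam 0 * (x ⬝ᵥ x) ≤ x ⬝ᵥ Θ *ᵥ x := fun x => by
    have hxx : 0 ≤ x ⬝ᵥ x := by simpa using dotProduct_self_star_nonneg x
    have hΘx : 0 ≤ x ⬝ᵥ Θ *ᵥ x := by simpa using hΘ.dotProduct_mulVec_nonneg x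
    rw [max_mul_of_nonneg _ _ hxx, zero_mul]
    exact max_le (hlam x) hΘx
  have hμcond : αM ^ 2 - 1 ≤ max lam 0 * αm ^ 2 :=
    calc αM ^ 2 - 1 ≤ lam * αm ^ 2 := (div_le_iff₀ (pow_pos hαm 2)).mp hcond
      _ ≤ max lam 0 * αm ^ 2 := by gcongr; exact le_max_left lam 0
  refine posSemidef_multiplicativeLink hdiag α
    (posSemidef_sub_smul_one_of_le_dotProduct_mulVec hΘ.isHermitian hμ) fun i => ?_
  have hmi : αm ^ 2 ≤ α i ^ 2 := by simpa using pow_le_pow_left₀ hαm.le (hm i) 2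
  have hMi : α i ^ 2 ≤ αM ^ 2 := by simpa using pow_le_pow_left₀ (abs_nonneg _) (hM i) 2
  nlinarith [mul_le_mul_of_nonneg_left hmi (le_max_right lam 0)]
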